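/- Let Ω ⊆ ℂ be a domain starlike at infinity with 0 ∈ NP(Ω), let t > 0 with it ∈ Ω, and let β ∈ (π/2, π] be such that {i t e^{−iθ} : 0 ≤ θ < β} ⊆ Ω. Then for every ε ∈ (0,β) there exists δ ∈ (0,1) such that for each x ∈ [t(1−δ), t], either α⁺_{Ω,0}(x) ≤ π − (β − ε) or α⁺_{Ω,0}(x) ≥ β − ε. -/

import Mathlib

open Complex Set

def StarlikeAtInf (Ω : Set ℂ) : Prop :=
  ∀ z ∈ Ω, ∀ s : ℝ, 0 ≤ s → z + s * I ∈ Ω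

def NP (Ω : Set ℂ) : Set ℂ :=
  {p | ∃ t₀ : ℝ, 0 ≤ t₀ ∧ ∀ s : ℝ, t₀ < s → p + s * I ∈ Ω}

noncomputable def alphaPlus (Ω : Set ℂ) (p : ℂ) (t : ℝ) : ℝ :=
  min Real.pi (sSup {α : ℝ | 0 < α ∧ ∀ θ ∈ Set.Icc (0 : ℝ) α,
    p + I * t * Complex.exp (-(I * θ)) ∈ Ω})

/-! The arc of radius `t` up to angle `β - ε` is a compact subset of the open set `Ω`, so it has
a uniform neighbourhood in `Ω`; arcs of nearby radius `x` lie within `|x - t|` of it. Hence the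
right angular extent at `x` is at least `β - ε` for all `x` close to `t`. -/

theorem dist_arc_arc (x y θ : ℝ) :
    dist (I * x * exp (-(I * θ))) (I * y * exp (-(I * θ))) = |x - y| := by
  have hexp : ‖exp (-(I * θ))‖ = 1 := by
    rw [norm_exp]; simp
  rw [dist_eq, ← sub_mul, ← mul_sub, norm_mul, norm_mul, hexp, norm_I, ← ofReal_sub,
    norm_real, Real.norm_eq_abs, one_mul, mul_one]

theorem exists_pos_arc_mem_of_isOpen {U : Set ℂ} (hU : IsOpen U) {a b R : ℝ}
    (harc : ∀ θ ∈ Icc a b, I * R * exp (-(I * θ)) ∈ U) :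
    ∃ r > 0, ∀ x : ℝ, |x - R| < r → ∀ θ ∈ Icc a b, I * x * exp (-(I * θ)) ∈ U := by
  set γ : ℝ → ℂ := fun θ => I * R * exp (-(I * θ))
  have hK : IsCompact (γ '' Icc a b) := isCompact_Icc.image (by fun_prop)
  obtain ⟨r, hr, hthick⟩ := hK.exists_thickening_subset_open hU (image_subset_iff.2 harc)
  refine ⟨r, hr, fun x hx θ hθ => hthick ?_⟩
  rw [Metric.mem_thickening_iff]
  exact ⟨γ θ, mem_image_of_mem γ hθ, by rwa [dist_arc_arc]⟩

/-- The alternative `alphaPlus Ω p x = 0` is the junk value of `sSup` on the unbounded set of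
admissible angles, which occurs when the whole circle lies in `Ω`. -/
theorem le_alphaPlus_or_alphaPlus_eq_zero {Ω : Set ℂ} {p : ℂ} {x α : ℝ} (hα : 0 < α)
    (hαπ : α ≤ Real.pi) (harc : ∀ θ ∈ Icc 0 α, p + I * x * exp (-(I * θ)) ∈ Ω) :
    α ≤ alphaPlus Ω p x ∨ alphaPlus Ω p x = 0 := by
  set S := {α : ℝ | 0 < α ∧ ∀ θ ∈ Icc (0 : ℝ) α, p + I * x * exp (-(I * θ)) ∈ Ω}
  by_cases hS : BddAbove S
  · exact .inl (le_min hαπ (le_csSup hS ⟨hα, harc⟩))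
  · exact .inr (by rw [alphaPlus, Real.sSup_of_not_bddAbove hS, min_eq_right Real.pi_pos.le])

theorem stmt_12_general (Ω : Set ℂ) (hopen : IsOpen Ω)
    (t : ℝ) (ht : 0 < t)
    (β : ℝ) (hβ' : β ≤ Real.pi)
    (hL : ∀ θ : ℝ, 0 ≤ θ → θ < β → I * t * Complex.exp (-(I * θ)) ∈ Ω) :
    ∀ ε : ℝ, 0 < ε → ε < β → ∃ δ : ℝ, 0 < δ ∧ δ < 1 ∧
      ∀ x : ℝ, t * (1 - δ) ≤ x → x ≤ t →
        alphaPlus Ω 0 x ≤ Real.pi - (β - ε) ∨ β - ε ≤ alphaPlus Ω 0 x := by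
  intro ε hε hεβ
  obtain ⟨r, hr, hnear⟩ := exists_pos_arc_mem_of_isOpen hopen (a := 0) (b := β - ε) (R := t)
    fun θ hθ => hL θ hθ.1 (by linarith [hθ.2])
  refine ⟨r / (t + r), by positivity, (div_lt_one (by positivity)).2 (by linarith), ?_⟩
  intro x hx hxt
  have hclose : |x - t| < r := by
    rw [abs_of_nonpos (by linarith)]
    calc -(x - t) ≤ t * r / (t + r) := by linarith [mul_div_assoc t r (t + r)]
      _ < r := by rw [div_lt_iff₀ (by positivity)]; nlinarith
  have harc : ∀ θ ∈ Icc 0 (β - ε), (0 : ℂ) + I * x * exp (-(I * θ)) ∈ Ω := fun θ hθ => by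
    rw [zero_add]; exact hnear x hclose θ hθ
  rcases le_alphaPlus_or_alphaPlus_eq_zero (by linarith) (by linarith) harc with h | h
  · exact .inr h
  · exact .inl (by rw [h]; linarith)

theorem stmt_12 (Ω : Set ℂ) (hopen : IsOpen Ω) (hconn : IsConnected Ω)
    (hstar : StarlikeAtInf Ω) (hNP : (0 : ℂ) ∈ NP Ω)
    (t : ℝ) (ht : 0 < t) (htΩ : (t : ℂ) * I ∈ Ω)
    (β : ℝ) (hβ : Real.pi / 2 < β) (hβ' : β ≤ Real.pi)
    (hL : ∀ θ : ℝ, 0 ≤ θ → θ < β → I * t * Complex.exp (-(I * θ)) ∈ Ω) :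
    ∀ ε : ℝ, 0 < ε → ε < β → ∃ δ : ℝ, 0 < δ ∧ δ < 1 ∧
      ∀ x : ℝ, t * (1 - δ) ≤ x → x ≤ t →
        alphaPlus Ω 0 x ≤ Real.pi - (β - ε) ∨ β - ε ≤ alphaPlus Ω 0 x :=
  stmt_12_general Ω hopen t ht β hβ' hL
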